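/- arXiv:2106.00986 — 2 statements merged into one kernel-verified Lean document; each statement's English description precedes it below -/
import Mathlib

section
/- Let T : D(T) ⊆ H → H be a densely defined, symmetric operator that is bounded from below, and let T^F be its Friedrichs extension. Then the bottom of the spectrum of T^F equals the infimum of ⟨Tv, v⟩/‖v‖² over all nonzero v ∈ D(T). -/
/-! If `μ` bounds the Rayleigh quotients of `T` from below, it also bounds those of `T^F`: for
`v ∈ D(T^F)` take `uₙ ∈ D(T)` converging to `v` and Cauchy for the form norm. Polarization of the
nonnegative form `⟪(T - μ) ·, ·⟫` gives `⟪(T - μ) uₘ, uₙ⟫ ≥ -½ ⟪(T - μ)(uₘ - uₙ), uₘ - uₙ⟫`, and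
letting `m → ∞`, then `n → ∞`, yields `⟪T^F v, v⟫ ≥ μ ‖v‖²`.

Since `T^F` is self-adjoint and bounded below by `μ`, `T^F - λ` is coercive for `λ < μ`; its range
is then closed with trivial orthogonal complement, so it is bijective. If `T^F - μ` were bijective,
its inverse would be bounded, say by `C`, by the closed graph theorem, and nonnegativity of the
form at `(C + 1) v - (T^F - μ)⁻¹ v` would give `⟪T^F v, v⟫ ≥ (μ + (C + 1)⁻¹) ‖v‖²`, contradicting
that `μ` is the infimum over `D(T) ⊆ D(T^F)`. -/

open Filter Topology

/-- The spectrum of a (possibly unbounded) densely defined operator `T`, as in the paper: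
the set of real `λ` such that `T - λ : D(T) → H` is not bijective. -/
def LinearPMap.paperSpectrum {H : Type*} [NormedAddCommGroup H] [InnerProductSpace ℝ H]
    (T : H →ₗ.[ℝ] H) : Set ℝ :=
  {l | ¬ Function.Bijective fun v : T.domain => T v - l • (v : H)}

/-- `TF` is the Friedrichs extension of the densely defined symmetric operator `T`, bounded
from below with constant `c`: it is a self-adjoint extension of `T` whose domain consists of
those vectors of the domain of the adjoint `T*` that lie in the form-completion `H_T` of
`D(T)`, i.e. that are limits of sequences in `D(T)` which are Cauchy with respect to the
form norm `⟨v,w⟩_T = ⟨Tv,w⟩ + (1-c)⟨v,w⟩`. -/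
structure IsFriedrichsExtension {H : Type*} [NormedAddCommGroup H] [InnerProductSpace ℝ H]
    [CompleteSpace H] (T TF : H →ₗ.[ℝ] H) (c : ℝ) : Prop where
  le : T ≤ TF
  selfAdjoint : IsSelfAdjoint TF
  domain_sub_adjoint : TF.domain ≤ T.adjoint.domain
  agrees_with_adjoint : ∀ v : TF.domain, ∀ w : T.adjoint.domain, (v : H) = (w : H) →
    TF v = T.adjoint w
  domain_in_form_closure : ∀ v : TF.domain, ∃ u : ℕ → T.domain,
    Tendsto (fun n => ((u n : H))) atTop (𝓝 (v : H)) ∧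
    (∀ ε > 0, ∃ N, ∀ m ≥ N, ∀ n ≥ N,
      (inner ℝ (T (u m - u n)) ((u m : H) - (u n : H)) : ℝ)
        + (1 - c) * ‖(u m : H) - (u n : H)‖ ^ 2 < ε)
  adjoint_form_domain : ∀ w : T.adjoint.domain,
    ((∃ u : ℕ → T.domain, Tendsto (fun n => ((u n : H))) atTop (𝓝 (w : H)) ∧
      (∀ ε > 0, ∃ N, ∀ m ≥ N, ∀ n ≥ N,
        (inner ℝ (T (u m - u n)) ((u m : H) - (u n : H)) : ℝ)
          + (1 - c) * ‖(u m : H) - (u n : H)‖ ^ 2 < ε))) → (w : H) ∈ TF.domain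

open LinearPMap
open scoped RealInnerProductSpace

section

variable {H : Type*} [NormedAddCommGroup H] [InnerProductSpace ℝ H]

namespace LinearPMap

def subSMul (A : H →ₗ.[ℝ] H) (l : ℝ) : A.domain →ₗ[ℝ] H :=
  A.toFun - l • A.domain.subtype

@[simp]
theorem subSMul_apply (A : H →ₗ.[ℝ] H) (l : ℝ) (v : A.domain) :
    A.subSMul l v = A v - l • (v : H) :=
  rfl

theorem mem_paperSpectrum_iff {A : H →ₗ.[ℝ] H} {l : ℝ} :
    l ∈ A.paperSpectrum ↔ ¬ Function.Bijective (A.subSMul l) :=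
  Iff.rfl

theorem paperSpectrum_eq_empty [Subsingleton H] (A : H →ₗ.[ℝ] H) : A.paperSpectrum = ∅ :=
  Set.eq_empty_iff_forall_notMem.2 fun _ h =>
    h ⟨fun _ _ _ => Subsingleton.elim _ _, fun _ => ⟨0, Subsingleton.elim _ _⟩⟩

def rayleighQuotients (T : H →ₗ.[ℝ] H) : Set ℝ :=
  {r | ∃ v : T.domain, (v : H) ≠ 0 ∧ r = ⟪T v, v⟫ / ‖(v : H)‖ ^ 2}

theorem mem_lowerBounds_rayleighQuotients_iff {T : H →ₗ.[ℝ] H} {μ : ℝ} :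
    μ ∈ lowerBounds T.rayleighQuotients ↔ ∀ x : T.domain, μ * ‖(x : H)‖ ^ 2 ≤ ⟪T x, x⟫ := by
  constructor
  · intro h x
    by_cases hx : (x : H) = 0
    · obtain rfl : x = 0 := Subtype.ext hx
      simp
    · exact (le_div_iff₀ (by positivity)).1 (h ⟨x, hx, rfl⟩)
  · rintro h r ⟨x, hx, rfl⟩
    exact (le_div_iff₀ (by positivity)).2 (h x)

theorem subsingleton_of_rayleighQuotients_eq_empty {T : H →ₗ.[ℝ] H}
    (hdense : Dense (T.domain : Set H)) (h : T.rayleighQuotients = ∅) : Subsingleton H := by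
  have hzero : (T.domain : Set H) ⊆ {0} := fun x hx =>
    of_not_not fun hx0 => (Set.eq_empty_iff_forall_notMem.1 h) _ ⟨⟨x, hx⟩, hx0, rfl⟩
  have huniv := closure_mono hzero
  rw [hdense.closure_eq, closure_singleton] at huniv
  exact ⟨fun a b => (huniv (Set.mem_univ a)).trans (huniv (Set.mem_univ b)).symm⟩

variable {A : H →ₗ.[ℝ] H} {μ l : ℝ}

theorem neg_le_two_mul_inner_apply (hA : A.IsFormalAdjoint A)
    (hμ : ∀ x : A.domain, μ * ‖(x : H)‖ ^ 2 ≤ ⟪A x, x⟫) (x y : A.domain) :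
    -(⟪A (x - y), (x : H) - y⟫ - μ * ‖(x : H) - y‖ ^ 2)
      ≤ 2 * (⟪(x : H), A y⟫ - μ * ⟪(x : H), y⟫) := by
  rw [map_sub, inner_sub_left, inner_sub_right, inner_sub_right, norm_sub_sq_real]
  linarith [hμ x, hμ y, hA x y, real_inner_comm (x : H) (A y)]

theorem le_inner_of_tendsto_of_cauchy (hA : A.IsFormalAdjoint A)
    (hμ : ∀ x : A.domain, μ * ‖(x : H)‖ ^ 2 ≤ ⟪A x, x⟫) {u : ℕ → A.domain} {v w : H}
    (hu : Tendsto (fun n => (u n : H)) atTop (𝓝 v))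
    (hcauchy : ∀ ε > 0, ∃ N, ∀ m ≥ N, ∀ n ≥ N,
      ⟪A (u m - u n), (u m : H) - u n⟫ - μ * ‖(u m : H) - u n‖ ^ 2 < ε)
    (hw : ∀ x : A.domain, ⟪w, x⟫ = ⟪v, A x⟫) :
    μ * ‖v‖ ^ 2 ≤ ⟪w, v⟫ := by
  have hlim_m : ∀ n, Tendsto (fun m => ⟪(u m : H), A (u n)⟫ - μ * ⟪(u m : H), u n⟫) atTop
      (𝓝 (⟪v, A (u n)⟫ - μ * ⟪v, u n⟫)) := fun n =>
    (hu.inner tendsto_const_nhds).sub ((hu.inner tendsto_const_nhds).const_mul μ)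
  have hlim_n : Tendsto (fun n => ⟪v, A (u n)⟫ - μ * ⟪v, u n⟫) atTop
      (𝓝 (⟪w, v⟫ - μ * ‖v‖ ^ 2)) := by
    simp_rw [← hw, ← real_inner_self_eq_norm_sq]
    exact (tendsto_const_nhds.inner hu).sub ((tendsto_const_nhds.inner hu).const_mul μ)
  refine le_of_forall_sub_le fun ε hε => ?_
  obtain ⟨N, hN⟩ := hcauchy (2 * ε) (by positivity)
  have hbound : ∀ n ≥ N, -ε ≤ ⟪v, A (u n)⟫ - μ * ⟪v, u n⟫ := fun n hn =>
    ge_of_tendsto (hlim_m n) <| eventually_atTop.2 ⟨N, fun m hm => by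
      linarith [hN m hm n hn, neg_le_two_mul_inner_apply hA hμ (u m) (u n)]⟩
  linarith [ge_of_tendsto hlim_n (eventually_atTop.2 ⟨N, hbound⟩)]

theorem IsClosed.exists_subSMul_eq_of_tendsto (hA : A.IsClosed) {v : ℕ → A.domain} {x y : H}
    (hx : Tendsto (fun k => (v k : H)) atTop (𝓝 x))
    (hy : Tendsto (fun k => A.subSMul l (v k)) atTop (𝓝 y)) :
    ∃ x' : A.domain, (x' : H) = x ∧ A.subSMul l x' = y := by
  have hAv : Tendsto (fun k => A (v k)) atTop (𝓝 (y + l • x)) := by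
    simpa using hy.add (hx.const_smul l)
  obtain ⟨x', hx', hAx'⟩ := A.mem_graph_iff.1 <|
    hA.mem_of_tendsto (hx.prodMk_nhds hAv) (Eventually.of_forall fun k => A.mem_graph (v k))
  exact ⟨x', hx', by simp [hAx', hx']⟩

theorem mul_norm_le_norm_subSMul (hμ : ∀ v : A.domain, μ * ‖(v : H)‖ ^ 2 ≤ ⟪A v, v⟫)
    (v : A.domain) : (μ - l) * ‖(v : H)‖ ≤ ‖A.subSMul l v‖ := by
  have hform : (μ - l) * ‖(v : H)‖ ^ 2 ≤ ‖A.subSMul l v‖ * ‖(v : H)‖ :=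
    calc (μ - l) * ‖(v : H)‖ ^ 2 ≤ ⟪A.subSMul l v, v⟫ := by
          rw [subSMul_apply, inner_sub_left, real_inner_smul_left, real_inner_self_eq_norm_sq]
          linarith [hμ v]
      _ ≤ ‖A.subSMul l v‖ * ‖(v : H)‖ := real_inner_le_norm _ _
  rcases (norm_nonneg (v : H)).eq_or_lt with h0 | hpos
  · simp [← h0]
  · nlinarith

theorem norm_sq_le_mul_inner_sub (hA : A.IsFormalAdjoint A)
    (hμ : ∀ v : A.domain, μ * ‖(v : H)‖ ^ 2 ≤ ⟪A v, v⟫) {C : ℝ} (hC : 0 ≤ C)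
    (hbound : ∀ y : A.domain, ‖(y : H)‖ ≤ C * ‖A.subSMul μ y‖)
    (hsurj : Function.Surjective (A.subSMul μ)) (v : A.domain) :
    ‖(v : H)‖ ^ 2 ≤ (C + 1) * (⟪A v, v⟫ - μ * ‖(v : H)‖ ^ 2) := by
  obtain ⟨y, hy⟩ := hsurj v
  have hAy : A y = v + μ • (y : H) := by rw [← hy, subSMul_apply, sub_add_cancel]
  have hvy : ⟪(v : H), y⟫ ≤ C * ‖(v : H)‖ ^ 2 :=
    calc ⟪(v : H), y⟫ ≤ ‖(v : H)‖ * ‖(y : H)‖ := real_inner_le_norm _ _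
      _ ≤ ‖(v : H)‖ * (C * ‖(v : H)‖) := by
          gcongr; simpa only [hy] using hbound y
      _ = C * ‖(v : H)‖ ^ 2 := by ring
  have hAvy : ⟪A v, y⟫ = ‖(v : H)‖ ^ 2 + μ * ⟪(v : H), y⟫ := by
    rw [hA v y, hAy, inner_add_right, real_inner_smul_right, real_inner_self_eq_norm_sq]
  -- the form `⟪(A - μ) w, w⟫` is nonnegative at `w = (C + 1) v - y`
  have hw := hμ ((C + 1) • v - y)
  simp only [LinearPMap.map_sub, LinearPMap.map_smul, Submodule.coe_sub, Submodule.coe_smul,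
    hAy, norm_sub_sq_real, norm_smul, inner_sub_left, inner_sub_right, inner_add_left,
    real_inner_smul_left, real_inner_smul_right, real_inner_self_eq_norm_sq, Real.norm_eq_abs,
    abs_of_nonneg (by linarith : (0 : ℝ) ≤ C + 1)] at hw
  rw [hAvy, real_inner_comm (v : H) (y : H)] at hw
  nlinarith [sq_nonneg ‖(v : H)‖]

section Complete

variable [CompleteSpace H]

theorem _root_.IsSelfAdjoint.isFormalAdjoint (hA : IsSelfAdjoint A) : A.IsFormalAdjoint A := by
  have h := adjoint_isFormalAdjoint hA.dense_domain (T := A)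
  rwa [isSelfAdjoint_def.1 hA] at h

theorem _root_.IsSelfAdjoint.exists_apply_eq_of_inner (hA : IsSelfAdjoint A) {y w : H}
    (h : ∀ z : A.domain, ⟪w, z⟫ = ⟪y, A z⟫) : ∃ y' : A.domain, (y' : H) = y ∧ A y' = w := by
  have hy : y ∈ A†.domain := mem_adjoint_domain_of_exists y ⟨w, h⟩
  have hgraph : (y, w) ∈ A†.graph := by
    simpa [adjoint_apply_eq hA.dense_domain ⟨y, hy⟩ h] using (A†).mem_graph ⟨y, hy⟩
  rw [isSelfAdjoint_def.1 hA] at hgraph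
  exact A.mem_graph_iff.1 hgraph

theorem isClosed_range_subSMul (hA : A.IsClosed)
    (hμ : ∀ v : A.domain, μ * ‖(v : H)‖ ^ 2 ≤ ⟪A v, v⟫) (hl : l < μ) :
    _root_.IsClosed (LinearMap.range (A.subSMul l) : Set H) := by
  refine IsSeqClosed.isClosed fun y z hy hyz => ?_
  choose v hv using hy
  have hcauchy : CauchySeq fun k => (v k : H) := by
    have hyc := Metric.cauchySeq_iff.1 hyz.cauchySeq
    refine Metric.cauchySeq_iff.2 fun ε hε => ?_
    obtain ⟨N, hN⟩ := hyc ((μ - l) * ε) (mul_pos (sub_pos.2 hl) hε)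
    refine ⟨N, fun m hm n hn => ?_⟩
    have h := mul_norm_le_norm_subSMul hμ (l := l) (v m - v n)
    rw [LinearMap.map_sub, hv, hv, ← dist_eq_norm, Submodule.coe_sub, ← dist_eq_norm] at h
    nlinarith [hN m hm n hn]
  obtain ⟨x, hx⟩ := cauchySeq_tendsto_of_complete hcauchy
  obtain ⟨x', -, hx'⟩ := hA.exists_subSMul_eq_of_tendsto hx (hyz.congr fun k => (hv k).symm)
  exact ⟨x', hx'⟩

theorem orthogonal_range_subSMul_eq_bot (hA : IsSelfAdjoint A)
    (hμ : ∀ v : A.domain, μ * ‖(v : H)‖ ^ 2 ≤ ⟪A v, v⟫) (hl : l < μ) :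
    (LinearMap.range (A.subSMul l))ᗮ = ⊥ := by
  refine (Submodule.eq_bot_iff _).2 fun y hy => ?_
  have hAy : ∀ z : A.domain, ⟪l • y, z⟫ = ⟪y, A z⟫ := fun z => by
    have h := Submodule.inner_right_of_mem_orthogonal (LinearMap.mem_range_self _ z) hy
    rw [subSMul_apply, inner_sub_left, real_inner_smul_left, real_inner_comm y, sub_eq_zero] at h
    rw [real_inner_smul_left, real_inner_comm, ← h]
  obtain ⟨y', rfl, hy'⟩ := hA.exists_apply_eq_of_inner hAy
  have h := hμ y'
  rw [hy', real_inner_smul_left, real_inner_self_eq_norm_sq] at h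
  have : ‖(y' : H)‖ ^ 2 = 0 := le_antisymm (by nlinarith [sq_nonneg ‖(y' : H)‖]) (sq_nonneg _)
  simpa using this

theorem bijective_subSMul (hA : IsSelfAdjoint A)
    (hμ : ∀ v : A.domain, μ * ‖(v : H)‖ ^ 2 ≤ ⟪A v, v⟫) (hl : l < μ) :
    Function.Bijective (A.subSMul l) := by
  refine ⟨(injective_iff_map_eq_zero _).2 fun v hv => ?_, LinearMap.range_eq_top.1 ?_⟩
  · have h := mul_norm_le_norm_subSMul hμ (l := l) v
    rw [hv, norm_zero] at h
    exact Subtype.ext (norm_le_zero_iff.1 (nonpos_of_mul_nonpos_right h (by linarith)))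
  · rw [← (isClosed_range_subSMul hA.isClosed hμ hl).submodule_topologicalClosure_eq,
      Submodule.topologicalClosure_eq_top_iff]
    exact orthogonal_range_subSMul_eq_bot hA hμ hl

theorem exists_norm_le_mul_norm_subSMul (hA : A.IsClosed) (h : Function.Bijective (A.subSMul l)) :
    ∃ C, 0 ≤ C ∧ ∀ y : A.domain, ‖(y : H)‖ ≤ C * ‖A.subSMul l y‖ := by
  set e := LinearEquiv.ofBijective _ h
  let R : H →L[ℝ] H := ContinuousLinearMap.ofSeqClosedGraph
    (g := A.domain.subtype ∘ₗ e.symm.toLinearMap) fun y x z hy hz => by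
      obtain ⟨z', rfl, hz'⟩ := hA.exists_subSMul_eq_of_tendsto hz
        (hy.congr fun k => (e.apply_symm_apply (y k)).symm)
      rw [← hz']
      exact congrArg Subtype.val (e.symm_apply_apply z').symm
  refine ⟨‖R‖, norm_nonneg _, fun y => ?_⟩
  have hRy : R (A.subSMul l y) = y := congrArg Subtype.val (e.symm_apply_apply y)
  simpa only [hRy] using R.le_opNorm (A.subSMul l y)

theorem not_bijective_subSMul (hA : IsSelfAdjoint A)
    (hμ : ∀ v : A.domain, μ * ‖(v : H)‖ ^ 2 ≤ ⟪A v, v⟫)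
    (hnear : ∀ ε > 0, ∃ v : A.domain, ⟪A v, v⟫ < (μ + ε) * ‖(v : H)‖ ^ 2) :
    ¬ Function.Bijective (A.subSMul μ) := by
  intro h
  obtain ⟨C, hC, hbound⟩ := exists_norm_le_mul_norm_subSMul hA.isClosed h
  obtain ⟨v, hv⟩ := hnear (C + 1)⁻¹ (by positivity)
  have hlt : (C + 1) * (⟪A v, v⟫ - μ * ‖(v : H)‖ ^ 2) < ‖(v : H)‖ ^ 2 :=
    calc _ < (C + 1) * ((C + 1)⁻¹ * ‖(v : H)‖ ^ 2) := by gcongr; linarith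
      _ = ‖(v : H)‖ ^ 2 := by field_simp
  linarith [norm_sq_le_mul_inner_sub hA.isFormalAdjoint hμ hC hbound h.2 v]

end Complete

end LinearPMap

theorem IsFriedrichsExtension.mul_norm_sq_le_inner_apply [CompleteSpace H] {T TF : H →ₗ.[ℝ] H}
    {c μ : ℝ} (hF : IsFriedrichsExtension T TF c) (hdense : Dense (T.domain : Set H))
    (hsymm : T.IsFormalAdjoint T) (hcμ : c - 1 ≤ μ)
    (hμ : ∀ x : T.domain, μ * ‖(x : H)‖ ^ 2 ≤ ⟪T x, x⟫) (v : TF.domain) :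
    μ * ‖(v : H)‖ ^ 2 ≤ ⟪TF v, v⟫ := by
  obtain ⟨u, hu, hcauchy⟩ := hF.domain_in_form_closure v
  refine le_inner_of_tendsto_of_cauchy hsymm hμ hu (fun ε hε => ?_) fun x => ?_
  · obtain ⟨N, hN⟩ := hcauchy ε hε
    refine ⟨N, fun m hm n hn => lt_of_le_of_lt ?_ (hN m hm n hn)⟩
    linarith [mul_le_mul_of_nonneg_right hcμ (sq_nonneg ‖(u m : H) - u n‖)]
  · rw [hF.agrees_with_adjoint v ⟨v, hF.domain_sub_adjoint v.2⟩ rfl]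
    exact adjoint_isFormalAdjoint hdense _ x

end

theorem stmt2_general {H : Type*} [NormedAddCommGroup H] [InnerProductSpace ℝ H]
    [CompleteSpace H]
    (T TF : H →ₗ.[ℝ] H) (hdense : Dense (T.domain : Set H))
    (hsymm : ∀ u v : T.domain, (inner ℝ (T u) ((v : H)) : ℝ) = (inner ℝ ((u : H)) (T v) : ℝ))
    (c : ℝ) (hbd : ∀ v : T.domain, c * ‖(v : H)‖ ^ 2 ≤ (inner ℝ (T v) ((v : H)) : ℝ))
    (hF : IsFriedrichsExtension T TF c) :
    sInf TF.paperSpectrum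
      = sInf {r : ℝ | ∃ v : T.domain, (v : H) ≠ 0 ∧
          r = (inner ℝ (T v) ((v : H)) : ℝ) / ‖(v : H)‖ ^ 2} := by
  change sInf TF.paperSpectrum = sInf T.rayleighQuotients
  rcases T.rayleighQuotients.eq_empty_or_nonempty with hempty | hne
  · have := subsingleton_of_rayleighQuotients_eq_empty hdense hempty
    rw [hempty, paperSpectrum_eq_empty]
  have hc : c ∈ lowerBounds T.rayleighQuotients := mem_lowerBounds_rayleighQuotients_iff.2 hbd
  have hglb := isGLB_csInf hne ⟨c, hc⟩
  set ρ := sInf T.rayleighQuotients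
  have hρT := mem_lowerBounds_rayleighQuotients_iff.1 hglb.1
  have hρTF := hF.mul_norm_sq_le_inner_apply hdense hsymm (by linarith [hglb.2 hc]) hρT
  have hnear : ∀ ε > 0, ∃ v : TF.domain, ⟪TF v, v⟫ < (ρ + ε) * ‖(v : H)‖ ^ 2 := fun ε hε => by
    have hρε : ρ + ε ∉ lowerBounds T.rayleighQuotients := fun h => by linarith [hglb.2 h]
    simp only [mem_lowerBounds_rayleighQuotients_iff, not_forall, not_le] at hρε
    obtain ⟨x, hx⟩ := hρε
    exact ⟨⟨x, hF.le.1 x.2⟩, by rwa [← hF.le.2 rfl]⟩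
  refine IsLeast.csInf_eq ⟨mem_paperSpectrum_iff.2 ?_, fun l hl => not_lt.1 fun hlt => ?_⟩
  · exact not_bijective_subSMul hF.selfAdjoint hρTF hnear
  · exact mem_paperSpectrum_iff.1 hl (bijective_subSMul hF.selfAdjoint hρTF hlt)

/-- the bottom of the spectrum of the Friedrichs extension `T^F` of a densely
defined, symmetric, bounded-below operator `T` equals the infimum of the Rayleigh quotients
`⟨Tv, v⟩ / ‖v‖²` over nonzero `v ∈ D(T)`. -/
theorem stmt2 {H : Type*} [NormedAddCommGroup H] [InnerProductSpace ℝ H]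
    [CompleteSpace H] [TopologicalSpace.SeparableSpace H]
    (T TF : H →ₗ.[ℝ] H) (hdense : Dense (T.domain : Set H))
    (hsymm : ∀ u v : T.domain, (inner ℝ (T u) ((v : H)) : ℝ) = (inner ℝ ((u : H)) (T v) : ℝ))
    (c : ℝ) (hbd : ∀ v : T.domain, c * ‖(v : H)‖ ^ 2 ≤ (inner ℝ (T v) ((v : H)) : ℝ))
    (hF : IsFriedrichsExtension T TF c) :
    sInf TF.paperSpectrum
      = sInf {r : ℝ | ∃ v : T.domain, (v : H) ≠ 0 ∧
          r = (inner ℝ (T v) ((v : H)) : ℝ) / ‖(v : H)‖ ^ 2} :=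
  stmt2_general T TF hdense hsymm c hbd hF
end

section
/- Let a group Γ with a finite symmetric generating set G act on the right on a countable set X. The action is amenable (i.e., there exists a Γ-invariant mean on ℓ^∞(X)) if and only if for every ε > 0 there exists a nonempty finite subset P of X such that |Pg \ P| < ε|P| for every g ∈ G (Følner's criterion). -/
/-!
If `Pₙ` are nonempty finite sets with `|Pₙ g \ Pₙ| / |Pₙ| → 0` for every generator `g`, the
averages of a bounded function over `Pₙ` are asymptotically invariant under the generators, so
their limit along an ultrafilter refining `atTop` is an invariant mean.

Conversely, suppose that for some `ε > 0` no finite set is `ε`-Følner. Then one step of the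
Cayley ball `S = {1} ∪ Gen` enlarges every nonempty finite set by a factor `1 + ε`, so for `k`
with `(1 + ε) ^ k ≥ 2` the ball `S ^ k` satisfies `|A S ^ k| ≥ 2 |A|`. Hall's theorem turns this
into an injection `X × Fin 2 → X` that moves every point by an element of `S ^ k`; splitting `X`
into the finitely many pieces on which it is a single translation, an invariant mean would give
`X` mass `2` and at the same time at most `1`.
-/

/-- A function on `X` is bounded. -/
def IsBdd {X : Type*} (f : X → ℝ) : Prop := ∃ C : ℝ, ∀ x, |f x| ≤ C

/-- An invariant mean for a right action `act` of `Γ` on `X`: a linear functional on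
`ℓ^∞(X)` with `inf f ≤ μ(f) ≤ sup f` and `μ(f ∘ r_g) = μ(f)` for all `g ∈ Γ`. -/
structure IsInvariantMean {Γ X : Type*} [Group Γ] (act : X → Γ → X)
    (μ : (X → ℝ) → ℝ) : Prop where
  map_add : ∀ f g : X → ℝ, IsBdd f → IsBdd g → μ (f + g) = μ f + μ g
  map_smul : ∀ (c : ℝ) (f : X → ℝ), IsBdd f → μ (c • f) = c * μ f
  between : ∀ f : X → ℝ, IsBdd f → sInf (Set.range f) ≤ μ f ∧ μ f ≤ sSup (Set.range f)
  invariant : ∀ (f : X → ℝ) (g : Γ), IsBdd f → μ (fun x => f (act x g)) = μ f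

open Filter Topology Finset
open scoped BigOperators Pointwise

lemma isBdd_const {X : Type*} (c : ℝ) : IsBdd (fun _ : X => c) :=
  ⟨|c|, fun _ => le_rfl⟩

lemma isBdd_indicator_one {X : Type*} (s : Set X) : IsBdd (s.indicator 1) :=
  ⟨1, fun x => by by_cases hx : x ∈ s <;> simp [hx]⟩

namespace IsBdd

variable {X : Type*} {f g : X → ℝ}

lemma add (hf : IsBdd f) (hg : IsBdd g) : IsBdd (f + g) := by
  obtain ⟨C, hC⟩ := hf
  obtain ⟨D, hD⟩ := hg
  exact ⟨C + D, fun x => (abs_add_le _ _).trans (add_le_add (hC x) (hD x))⟩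

lemma const_smul (hf : IsBdd f) (c : ℝ) : IsBdd (c • f) := by
  obtain ⟨C, hC⟩ := hf
  exact ⟨|c| * C, fun x => by
    simpa [abs_mul] using mul_le_mul_of_nonneg_left (hC x) (abs_nonneg c)⟩

lemma comp {Y : Type*} (hf : IsBdd f) (φ : Y → X) : IsBdd (f ∘ φ) := by
  obtain ⟨C, hC⟩ := hf
  exact ⟨C, fun y => hC (φ y)⟩

lemma sum {ι : Type*} {s : Finset ι} {F : ι → X → ℝ} (hF : ∀ i ∈ s, IsBdd (F i)) :
    IsBdd (∑ i ∈ s, F i) := by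
  classical
  induction s using Finset.induction_on with
  | empty => rw [sum_empty]; exact isBdd_const 0
  | insert a s ha ih =>
    rw [sum_insert ha]
    exact (hF a (mem_insert_self a s)).add (ih fun i hi => hF i (mem_insert_of_mem hi))

lemma bddBelow_range (hf : IsBdd f) : BddBelow (Set.range f) := by
  obtain ⟨C, hC⟩ := hf
  exact ⟨-C, by rintro _ ⟨x, rfl⟩; exact (abs_le.1 (hC x)).1⟩

lemma bddAbove_range (hf : IsBdd f) : BddAbove (Set.range f) := by
  obtain ⟨C, hC⟩ := hf
  exact ⟨C, by rintro _ ⟨x, rfl⟩; exact (abs_le.1 (hC x)).2⟩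

lemma exists_tendsto_ultrafilter (hf : IsBdd f) (u : Ultrafilter X) :
    ∃ L, Tendsto f u (𝓝 L) := by
  obtain ⟨C, hC⟩ := hf
  have hu : (u.map f : Filter ℝ) ≤ 𝓟 (Set.Icc (-C) C) :=
    le_principal_iff.2 (mem_map.2 (univ_mem' fun x => abs_le.1 (hC x)))
  obtain ⟨L, -, hL⟩ := isCompact_Icc.ultrafilter_le_nhds (u.map f) hu
  exact ⟨L, hL⟩

end IsBdd

namespace IsInvariantMean

variable {Γ X : Type*} [Group Γ] {act : X → Γ → X} {μ : (X → ℝ) → ℝ}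

lemma map_zero (hμ : IsInvariantMean act μ) : μ 0 = 0 := by
  simpa using hμ.map_smul 0 0 (isBdd_const 0)

lemma map_const [Nonempty X] (hμ : IsInvariantMean act μ) (c : ℝ) : μ (fun _ => c) = c := by
  have h := hμ.between _ (isBdd_const c)
  rw [Set.range_const, csInf_singleton, csSup_singleton] at h
  exact le_antisymm h.2 h.1

lemma map_sum {ι : Type*} (hμ : IsInvariantMean act μ) {s : Finset ι} {F : ι → X → ℝ}
    (hF : ∀ i ∈ s, IsBdd (F i)) : μ (∑ i ∈ s, F i) = ∑ i ∈ s, μ (F i) := by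
  classical
  induction s using Finset.induction_on with
  | empty => simpa using hμ.map_zero
  | insert a s ha ih =>
    have hs : ∀ i ∈ s, IsBdd (F i) := fun i hi => hF i (mem_insert_of_mem hi)
    rw [sum_insert ha, sum_insert ha,
      hμ.map_add _ _ (hF a (mem_insert_self a s)) (IsBdd.sum hs), ih hs]

lemma le_of_forall_le [Nonempty X] (hμ : IsInvariantMean act μ) {f : X → ℝ} (hf : IsBdd f)
    {c : ℝ} (h : ∀ x, f x ≤ c) : μ f ≤ c :=
  (hμ.between f hf).2.trans (csSup_le (Set.range_nonempty f) (by rintro _ ⟨x, rfl⟩; exact h x))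

end IsInvariantMean

section RightAction

variable {Γ X : Type*} [Group Γ] {act : X → Γ → X}

lemma act_injective (act_one : ∀ x, act x 1 = x)
    (act_mul : ∀ (x : X) (g h : Γ), act (act x g) h = act x (g * h)) (g : Γ) :
    Function.Injective (act · g) := by
  intro x y hxy
  simpa [act_mul, act_one] using congrArg (act · g⁻¹) hxy

lemma invariant_of_closure_eq_top (act_one : ∀ x, act x 1 = x)
    (act_mul : ∀ (x : X) (g h : Γ), act (act x g) h = act x (g * h))
    {Gen : Set Γ} (hgen : Subgroup.closure Gen = ⊤) {μ : (X → ℝ) → ℝ}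
    (hμ : ∀ g ∈ Gen, ∀ f, IsBdd f → μ (fun x => f (act x g)) = μ f)
    (g : Γ) : ∀ f, IsBdd f → μ (fun x => f (act x g)) = μ f := by
  have hg : g ∈ Subgroup.closure Gen := hgen ▸ Subgroup.mem_top g
  induction hg using Subgroup.closure_induction with
  | mem g hg => exact hμ g hg
  | one => simp [act_one]
  | mul g h _ _ ihg ihh =>
    intro f hf
    simpa [act_mul] using (ihg _ (hf.comp (act · h))).trans (ihh f hf)
  | inv g _ ihg =>
    intro f hf
    simpa [Function.comp_def, act_mul, act_one] using (ihg _ (hf.comp (act · g⁻¹))).symm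

end RightAction

lemma abs_sum_sub_sum_le_of_card_eq {X : Type*} [DecidableEq X] {f : X → ℝ} {C : ℝ}
    (hf : ∀ x, |f x| ≤ C) {s t : Finset X} (hst : #s = #t) :
    |∑ x ∈ t, f x - ∑ x ∈ s, f x| ≤ 2 * C * #(t \ s) := by
  have sum_le (u : Finset X) : |∑ x ∈ u, f x| ≤ #u * C :=
    (abs_sum_le_sum_abs f u).trans (by simpa using sum_le_card_nsmul u _ C fun x _ => hf x)
  rw [← sum_sdiff_sub_sum_sdiff]
  calc |∑ x ∈ t \ s, f x - ∑ x ∈ s \ t, f x|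
      ≤ |∑ x ∈ t \ s, f x| + |∑ x ∈ s \ t, f x| := abs_sub _ _
    _ ≤ #(t \ s) * C + #(s \ t) * C := add_le_add (sum_le _) (sum_le _)
    _ = 2 * C * #(t \ s) := by rw [card_sdiff_comm hst]; ring

lemma abs_expect_comp_sub_expect_le {Γ X : Type*} [Group Γ] [DecidableEq X]
    {act : X → Γ → X} (act_one : ∀ x, act x 1 = x)
    (act_mul : ∀ (x : X) (g h : Γ), act (act x g) h = act x (g * h))
    {f : X → ℝ} {C : ℝ} (hf : ∀ x, |f x| ≤ C) (P : Finset X) (g : Γ) :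
    |𝔼 x ∈ P, f (act x g) - 𝔼 x ∈ P, f x| ≤ 2 * C * (#(P.image (act · g) \ P) / #P) := by
  have hinj := act_injective act_one act_mul g
  have hcard : #P = #(P.image (act · g)) := (card_image_of_injective P hinj).symm
  rw [← expect_image hinj.injOn, expect_eq_sum_div_card, expect_eq_sum_div_card, ← hcard,
    ← sub_div, abs_div, Nat.abs_cast, mul_div_assoc']
  gcongr
  exact abs_sum_sub_sum_le_of_card_eq hf hcard

theorem exists_isInvariantMean_of_tendsto {Γ X : Type*} [Group Γ] [DecidableEq X]
    {act : X → Γ → X} (act_one : ∀ x, act x 1 = x)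
    (act_mul : ∀ (x : X) (g h : Γ), act (act x g) h = act x (g * h))
    {Gen : Set Γ} (hgen : Subgroup.closure Gen = ⊤)
    (P : ℕ → Finset X) (hP : ∀ n, (P n).Nonempty)
    (hfolner : ∀ g ∈ Gen,
      Tendsto (fun n => (#((P n).image (act · g) \ P n) : ℝ) / #(P n)) atTop (𝓝 0)) :
    ∃ μ : (X → ℝ) → ℝ, IsInvariantMean act μ := by
  set u := Ultrafilter.of (atTop : Filter ℕ)
  set μ : (X → ℝ) → ℝ := fun f => limUnder (u : Filter ℕ) fun n => 𝔼 x ∈ P n, f x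
  have hμ (f : X → ℝ) (hf : IsBdd f) :
      Tendsto (fun n => 𝔼 x ∈ P n, f x) u (𝓝 (μ f)) := by
    refine tendsto_nhds_limUnder (IsBdd.exists_tendsto_ultrafilter ?_ u)
    obtain ⟨C, hC⟩ := hf
    exact ⟨C, fun n => (abs_expect_le _ _).trans (expect_le (hP n) fun x _ => hC x)⟩
  refine ⟨μ, ⟨fun f g hf hg => ?_, fun c f hf => ?_, fun f hf => ?_, ?_⟩⟩
  · refine tendsto_nhds_unique (hμ _ (hf.add hg)) ?_
    simpa only [Pi.add_apply, expect_add_distrib] using (hμ f hf).add (hμ g hg)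
  · refine tendsto_nhds_unique (hμ _ (hf.const_smul c)) ?_
    simpa only [Pi.smul_apply, smul_eq_mul, mul_expect] using (hμ f hf).const_mul c
  · refine isClosed_Icc.mem_of_tendsto (hμ f hf) (Eventually.of_forall fun n => ⟨?_, ?_⟩)
    · exact le_expect (hP n) fun x _ => csInf_le hf.bddBelow_range ⟨x, rfl⟩
    · exact expect_le (hP n) fun x _ => le_csSup hf.bddAbove_range ⟨x, rfl⟩
  refine fun f g hf => invariant_of_closure_eq_top act_one act_mul hgen
    (fun g hg f hf => ?_) g f hf
  obtain ⟨C, hC⟩ := hf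
  have hdiff : Tendsto (fun n => 𝔼 x ∈ P n, f (act x g) - 𝔼 x ∈ P n, f x) u (𝓝 0) := by
    refine (squeeze_zero_norm (fun n => ?_) (by simpa using (hfolner g hg).const_mul (2 * C)))
      |>.mono_left (Ultrafilter.of_le _)
    exact abs_expect_comp_sub_expect_le act_one act_mul hC (P n) g
  refine tendsto_nhds_unique (hμ _ (IsBdd.comp ⟨C, hC⟩ (act · g))) ?_
  simpa using hdiff.add (hμ f ⟨C, hC⟩)

lemma card_add_card_image_sdiff_le_card_image₂ {Γ X : Type*} [DecidableEq X]
    {act : X → Γ → X} [One Γ] (act_one : ∀ x, act x 1 = x) {S : Finset Γ} (hS : 1 ∈ S)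
    {g : Γ} (hg : g ∈ S) (Q : Finset X) :
    #Q + #(Q.image (act · g) \ Q) ≤ #(image₂ act Q S) := by
  rw [add_comm, card_sdiff_add_card]
  refine card_le_card (union_subset (image_subset_iff.2 fun x hx => ?_) fun x hx => ?_)
  · exact mem_image₂_of_mem hx hg
  · simpa [act_one] using mem_image₂_of_mem (f := act) hx hS

lemma pow_mul_card_le_card_image₂_pow {Γ X : Type*} [Monoid Γ] [DecidableEq Γ] [DecidableEq X]
    {act : X → Γ → X} (act_one : ∀ x, act x 1 = x)
    (act_mul : ∀ (x : X) (g h : Γ), act (act x g) h = act x (g * h))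
    {S : Finset Γ} (hS : 1 ∈ S) {ε : ℝ} (hε : 0 ≤ ε)
    (hexpand : ∀ Q : Finset X, Q.Nonempty → ∃ g ∈ S, ε * #Q ≤ #(Q.image (act · g) \ Q))
    {A : Finset X} (hA : A.Nonempty) (n : ℕ) :
    (1 + ε) ^ n * #A ≤ #(image₂ act A (S ^ n)) := by
  induction n with
  | zero =>
    simp [← singleton_one, image₂_singleton_right, act_one]
  | succ n ih =>
    set Q := image₂ act A (S ^ n)
    have hQ : image₂ act A (S ^ (n + 1)) = image₂ act Q S := by
      rw [pow_succ]
      exact (image₂_assoc fun x g h => act_mul x g h).symm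
    obtain ⟨g, hg, hQg⟩ := hexpand Q (hA.image₂ (Finset.Nonempty.pow ⟨1, hS⟩))
    rw [hQ]
    calc (1 + ε) ^ (n + 1) * #A = (1 + ε) * ((1 + ε) ^ n * #A) := by ring
      _ ≤ (1 + ε) * #Q := by gcongr
      _ ≤ #Q + #(Q.image (act · g) \ Q) := by linarith
      _ ≤ #(image₂ act Q S) := mod_cast card_add_card_image_sdiff_le_card_image₂ act_one hS hg Q

lemma exists_injective_of_card_mul_le_card_biUnion {α β ι : Type*} [DecidableEq β] [Fintype ι]
    (T : α → Finset β) (hT : ∀ A : Finset α, Fintype.card ι * #A ≤ #(A.biUnion T)) :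
    ∃ f : α × ι → β, Function.Injective f ∧ ∀ p, f p ∈ T p.1 := by
  classical
  refine (all_card_le_biUnion_card_iff_exists_injective fun p : α × ι => T p.1).1 fun s => ?_
  calc #s ≤ #(s.image Prod.fst ×ˢ (univ : Finset ι)) :=
        card_le_card fun p hp => mem_product.2 ⟨mem_image_of_mem _ hp, mem_univ _⟩
    _ = Fintype.card ι * #(s.image Prod.fst) := by rw [card_product, card_univ, mul_comm]
    _ ≤ #((s.image Prod.fst).biUnion T) := hT _
    _ = #(s.biUnion fun p => T p.1) := by rw [image_biUnion]

/-- The pieces `{x | lab (x, i) = c}` cover `X` exactly `card ι` times, while their translates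
by `c` are pairwise disjoint. -/
lemma IsInvariantMean.card_le_one_of_injective {Γ X ι : Type*} [Group Γ] [Nonempty X] [Fintype ι]
    {act : X → Γ → X} (act_one : ∀ x, act x 1 = x)
    (act_mul : ∀ (x : X) (g h : Γ), act (act x g) h = act x (g * h))
    {μ : (X → ℝ) → ℝ} (hμ : IsInvariantMean act μ) {S : Finset Γ} {lab : X × ι → Γ}
    (hlab : ∀ p, lab p ∈ S) (hinj : Function.Injective fun p : X × ι => act p.1 (lab p)) :
    Fintype.card ι ≤ 1 := by
  classical
  set piece : ι × Γ → Set X := fun q => {x | lab (x, q.1) = q.2}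
  set moved : ι × Γ → Set X := fun q => (act · q.2) '' piece q
  set s := (univ : Finset ι) ×ˢ S
  have hcover : ∑ q ∈ s, (piece q).indicator 1 = fun _ => (Fintype.card ι : ℝ) := by
    ext x
    rw [Finset.sum_apply, sum_product]
    simp [piece, Set.indicator_apply, hlab]
  have hdisj : (s : Set (ι × Γ)).PairwiseDisjoint moved := by
    rintro ⟨i, c⟩ - ⟨j, d⟩ - hne
    refine Set.disjoint_left.2 ?_
    rintro _ ⟨x, hx, rfl⟩ ⟨y, hy, hxy⟩
    change lab (x, i) = c at hx
    change lab (y, j) = d at hy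
    obtain ⟨rfl, rfl⟩ := Prod.mk.inj (@hinj (y, j) (x, i) (by simpa [hx, hy] using hxy))
    exact hne (by rw [← hx, ← hy])
  have hmoved (q : ι × Γ) : μ ((moved q).indicator 1) = μ ((piece q).indicator 1) := by
    rw [← hμ.invariant _ q.2 (isBdd_indicator_one _)]
    congr 1
    ext x
    exact Set.indicator_image (act_injective act_one act_mul q.2)
  have hbdd := fun (t : ι × Γ → Set X) q (_ : q ∈ s) => isBdd_indicator_one (t q)
  suffices (Fintype.card ι : ℝ) ≤ 1 by exact_mod_cast this
  calc (Fintype.card ι : ℝ) = μ (∑ q ∈ s, (piece q).indicator 1) := by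
        rw [hcover, hμ.map_const]
    _ = μ (∑ q ∈ s, (moved q).indicator 1) := by
        rw [hμ.map_sum (hbdd piece), hμ.map_sum (hbdd moved)]
        exact sum_congr rfl fun q _ => (hmoved q).symm
    _ ≤ 1 := by
        refine hμ.le_of_forall_le (IsBdd.sum (hbdd moved)) fun x => ?_
        rw [Finset.sum_apply, ← indicator_biUnion_apply s moved hdisj]
        exact Set.indicator_apply_le' (fun _ => le_rfl) fun _ => zero_le_one

theorem IsInvariantMean.exists_folner {Γ X : Type*} [Group Γ] [Nonempty X] [DecidableEq X]
    {act : X → Γ → X} (act_one : ∀ x, act x 1 = x)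
    (act_mul : ∀ (x : X) (g h : Γ), act (act x g) h = act x (g * h))
    {μ : (X → ℝ) → ℝ} (hμ : IsInvariantMean act μ) (Gen : Finset Γ) {ε : ℝ} (hε : 0 < ε) :
    ∃ P : Finset X, P.Nonempty ∧ ∀ g ∈ Gen, (#(P.image (act · g) \ P) : ℝ) < ε * #P := by
  classical
  by_contra! hfail
  set S := insert 1 Gen
  obtain ⟨k, hk⟩ := pow_unbounded_of_one_lt (2 : ℝ) (lt_add_of_pos_right 1 hε)
  have hexpand (Q : Finset X) (hQ : Q.Nonempty) : ∃ g ∈ S, ε * #Q ≤ #(Q.image (act · g) \ Q) := by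
    obtain ⟨g, hg, hQg⟩ := hfail Q hQ
    exact ⟨g, mem_insert_of_mem hg, hQg⟩
  have hhall (A : Finset X) :
      Fintype.card (Fin 2) * #A ≤ #(A.biUnion fun x => (S ^ k).image (act x)) := by
    rw [biUnion_image_left, Fintype.card_fin]
    rcases A.eq_empty_or_nonempty with rfl | hA
    · simp
    have : (2 * #A : ℝ) ≤ #(image₂ act A (S ^ k)) :=
      calc (2 * #A : ℝ) ≤ (1 + ε) ^ k * #A := by gcongr
        _ ≤ #(image₂ act A (S ^ k)) :=
          pow_mul_card_le_card_image₂_pow act_one act_mul (mem_insert_self 1 Gen) hε.le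
            hexpand hA k
    exact_mod_cast this
  obtain ⟨f, hf, hfS⟩ := exists_injective_of_card_mul_le_card_biUnion _ hhall
  choose lab hlab hlab_eq using fun p => mem_image.1 (hfS p)
  have hinj : Function.Injective fun p : X × Fin 2 => act p.1 (lab p) := by
    simpa only [hlab_eq] using hf
  simpa using hμ.card_le_one_of_injective act_one act_mul hlab hinj

theorem stmt3_general {Γ X : Type*} [Group Γ] [Nonempty X] [DecidableEq X]
    (Gen : Finset Γ)
    (hgen : Subgroup.closure (Gen : Set Γ) = ⊤)
    (act : X → Γ → X) (act_one : ∀ x, act x 1 = x)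
    (act_mul : ∀ (x : X) (g h : Γ), act (act x g) h = act x (g * h)) :
    (∃ μ : (X → ℝ) → ℝ, IsInvariantMean act μ) ↔
      (∀ ε : ℝ, 0 < ε → ∃ P : Finset X, P.Nonempty ∧ ∀ g ∈ Gen,
        (((P.image fun x => act x g) \ P).card : ℝ) < ε * P.card) := by
  refine ⟨fun ⟨μ, hμ⟩ ε hε => hμ.exists_folner act_one act_mul Gen hε, fun hfolner => ?_⟩
  choose P hP hPε using fun n : ℕ => hfolner (1 / (n + 1)) Nat.one_div_pos_of_nat
  refine exists_isInvariantMean_of_tendsto act_one act_mul hgen P hP fun g hg => ?_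
  refine squeeze_zero (fun n => by positivity) (fun n => ?_)
    tendsto_one_div_add_atTop_nhds_zero_nat
  exact (div_lt_iff₀ (by exact_mod_cast (hP n).card_pos)).2 (hPε n g hg) |>.le

/-- Følner's criterion: a right action of a group `Γ`, with finite symmetric
generating set `Gen`, on a countable set `X` is amenable (admits an invariant mean on
`ℓ^∞(X)`) iff for every `ε > 0` there is a nonempty finite `P ⊆ X` with
`|Pg \ P| < ε |P|` for each generator `g`. -/
theorem stmt3 {Γ X : Type*} [Group Γ] [Countable X] [Nonempty X] [DecidableEq X]
    (Gen : Finset Γ) (hsym : ∀ g ∈ Gen, g⁻¹ ∈ Gen)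
    (hgen : Subgroup.closure (Gen : Set Γ) = ⊤)
    (act : X → Γ → X) (act_one : ∀ x, act x 1 = x)
    (act_mul : ∀ (x : X) (g h : Γ), act (act x g) h = act x (g * h)) :
    (∃ μ : (X → ℝ) → ℝ, IsInvariantMean act μ) ↔
      (∀ ε : ℝ, 0 < ε → ∃ P : Finset X, P.Nonempty ∧ ∀ g ∈ Gen,
        (((P.image fun x => act x g) \ P).card : ℝ) < ε * P.card) :=
  stmt3_general Gen hgen act act_one act_mul
end
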